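/- arXiv:2111.08304 — 3 statements merged into one kernel-verified Lean document; each statement's English description precedes it below -/
import Mathlib

section
/- Let α, β, γ > 0 with α + β + γ < 2, t > 1, and R(x) = x - 2/f(x) where f(x) = α/x + β/(x-1) + γ/(x-t). Then R'(x) < 0 for every real x with f(x) ≠ 0 and x ∉ {0,1,t}. -/
/-!
Writing `f = α u + β v + γ w` and `-f' = α u² + β v² + γ w²` with `u = 1/x`, `v = 1/(x-1)`,
`w = 1/(x-t)`, we have `R' = 1 - 2(-f')/f²`, and weighted Cauchy–Schwarz gives
`f² ≤ (α + β + γ)(-f') < 2(-f')` since `-f' > 0`.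
-/

theorem hasDerivAt_const_div_sub {a c x : ℝ} (hx : x ≠ c) :
    HasDerivAt (fun y : ℝ => a / (y - c)) (-(a * ((x - c)⁻¹) ^ 2)) x := by
  refine ((hasDerivAt_const x a).fun_div ((hasDerivAt_id' x).sub_const c)
    (sub_ne_zero.mpr hx)).congr_deriv ?_
  field_simp
  ring

theorem HasDerivAt.id_sub_const_div {f : ℝ → ℝ} {f' x : ℝ} (c : ℝ) (hf : HasDerivAt f f' x)
    (hfx : f x ≠ 0) :
    HasDerivAt (fun y => y - c / f y) (1 + c * f' / f x ^ 2) x := by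
  refine ((hasDerivAt_id' x).fun_sub ((hasDerivAt_const x c).fun_div hf hfx)).congr_deriv ?_
  field_simp
  ring

theorem sq_weighted_sum_le {a b c u v w : ℝ} (ha : 0 ≤ a) (hb : 0 ≤ b) (hc : 0 ≤ c) :
    (a * u + b * v + c * w) ^ 2 ≤ (a + b + c) * (a * u ^ 2 + b * v ^ 2 + c * w ^ 2) := by
  nlinarith [mul_nonneg (mul_nonneg ha hb) (sq_nonneg (u - v)),
    mul_nonneg (mul_nonneg ha hc) (sq_nonneg (u - w)),
    mul_nonneg (mul_nonneg hb hc) (sq_nonneg (v - w))]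

theorem one_add_two_mul_div_sq_lt_zero {a b c u v w : ℝ} (ha : 0 < a) (hb : 0 < b) (hc : 0 < c)
    (hsum : a + b + c < 2) (hu : u ≠ 0) (hF : a * u + b * v + c * w ≠ 0) :
    1 + 2 * -(a * u ^ 2 + b * v ^ 2 + c * w ^ 2) / (a * u + b * v + c * w) ^ 2 < 0 := by
  have hS : 0 < a * u ^ 2 + b * v ^ 2 + c * w ^ 2 := by positivity
  have hlt : (a * u + b * v + c * w) ^ 2 < 2 * (a * u ^ 2 + b * v ^ 2 + c * w ^ 2) :=
    calc (a * u + b * v + c * w) ^ 2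
        ≤ (a + b + c) * (a * u ^ 2 + b * v ^ 2 + c * w ^ 2) := sq_weighted_sum_le ha.le hb.le hc.le
      _ < 2 * (a * u ^ 2 + b * v ^ 2 + c * w ^ 2) := mul_lt_mul_of_pos_right hsum hS
  rw [mul_neg, neg_div, ← sub_eq_add_neg, sub_neg, one_lt_div (by positivity)]
  exact hlt

theorem R_deriv_neg_general
    (α β γ t : ℝ) (hα : 0 < α) (hβ : 0 < β) (hγ : 0 < γ)
    (hsum : α + β + γ < 2)
    (x : ℝ) (hx0 : x ≠ 0) (hx1 : x ≠ 1) (hxt : x ≠ t)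
    (hf : α / x + β / (x - 1) + γ / (x - t) ≠ 0) :
    deriv (fun y : ℝ => y - 2 / (α / y + β / (y - 1) + γ / (y - t))) x < 0 := by
  have hdx : HasDerivAt (fun y : ℝ => α / y) (-(α * x⁻¹ ^ 2)) x := by
    simpa using hasDerivAt_const_div_sub (a := α) (c := 0) hx0
  have hf' : HasDerivAt (fun y => α / y + β / (y - 1) + γ / (y - t)) _ x :=
    (hdx.add (hasDerivAt_const_div_sub hx1)).add (hasDerivAt_const_div_sub hxt)
  rw [(hf'.id_sub_const_div 2 hf).deriv]
  simp only [div_eq_mul_inv] at hf ⊢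
  convert one_add_two_mul_div_sq_lt_zero hα hβ hγ hsum (inv_ne_zero hx0) hf using 3
  ring

theorem R_deriv_neg
    (α β γ t : ℝ) (hα : 0 < α) (hβ : 0 < β) (hγ : 0 < γ)
    (hsum : α + β + γ < 2) (ht : 1 < t)
    (x : ℝ) (hx0 : x ≠ 0) (hx1 : x ≠ 1) (hxt : x ≠ t)
    (hf : α / x + β / (x - 1) + γ / (x - t) ≠ 0) :
    deriv (fun y : ℝ => y - 2 / (α / y + β / (y - 1) + γ / (y - t))) x < 0 :=
  R_deriv_neg_general α β γ t hα hβ hγ hsum x hx0 hx1 hxt hf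
end

section
/- If z₀ = x₀ + iy₀ with y₀ > 0 satisfies α/z₀ + β/(z₀-1) + γ/(z₀-t) = 1/(iy₀), where α,β,γ > 0, E := α+β+γ-1 with E < 1, and t > 1, then |z₀|² = ρ(x₀) where ρ(x) = αtx / ((1-E)x + E(t+1) - γt - β), provided the denominator is nonzero. -/
/-!
Multiplying the residue equation by `(z₀ - 1)(z₀ - t)` and expanding `α (z₀ - 1)(z₀ - t) / z₀` turns it
into `i y₀ ((E + 1) z₀ - b + α t / z₀) = (z₀ - 1)(z₀ - t)` with `b = α (1 + t) + β t + γ`.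
The imaginary part of this identity is `y₀` times a real equation in which `|z₀|²` enters only
through `Re (α t / z₀) = α t x₀ / |z₀|²`; it is linear in `1 / |z₀|²` and solves to `ρ(x₀)`.
-/

open Complex

lemma ne_ofReal_of_im_ne_zero {z : ℂ} (hz : z.im ≠ 0) (c : ℝ) : z ≠ c :=
  fun h => hz (by simp [h])

lemma three_poles_mul_eq (α β γ t : ℝ) {z : ℂ} (h₀ : z ≠ 0) (h₁ : z - 1 ≠ 0) (ht : z - t ≠ 0) :
    (α / z + β / (z - 1) + γ / (z - t)) * ((z - 1) * (z - t)) =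
      (α + β + γ) * z - (α * (1 + t) + β * t + γ) + α * t / z := by
  field_simp
  ring

lemma re_identity_of_residue_eq (α β γ t : ℝ) {z : ℂ} (hy : z.im ≠ 0)
    (heq : (α : ℂ) / z + β / (z - 1) + γ / (z - t) = 1 / (I * z.im)) :
    (α + β + γ) * z.re - (α * (1 + t) + β * t + γ) + α * t * z.re / normSq z =
      2 * z.re - 1 - t := by
  have h₀ : z ≠ 0 := by simpa using ne_ofReal_of_im_ne_zero hy 0
  have h₁ : z - 1 ≠ 0 := sub_ne_zero.mpr (by simpa using ne_ofReal_of_im_ne_zero hy 1)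
  have ht : z - t ≠ 0 := sub_ne_zero.mpr (ne_ofReal_of_im_ne_zero hy t)
  have hI : I * (z.im : ℂ) ≠ 0 := mul_ne_zero I_ne_zero (ofReal_ne_zero.mpr hy)
  have hmul := three_poles_mul_eq α β γ t h₀ h₁ ht
  rw [heq, one_div, inv_mul_eq_iff_eq_mul₀ hI] at hmul
  have him := congrArg im hmul
  simp only [mul_im, mul_re, I_re, I_im, ofReal_re, ofReal_im, sub_re, sub_im, add_re, add_im,
    one_re, one_im, div_re, div_im] at him
  apply mul_left_cancel₀ hy
  linear_combination -him

theorem normSq_eq_rho_general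
    (α β γ t : ℝ)
    (z₀ : ℂ) (hy : 0 < z₀.im)
    (heq : (α : ℂ) / z₀ + (β : ℂ) / (z₀ - 1) + (γ : ℂ) / (z₀ - t)
        = 1 / (I * (z₀.im : ℂ)))
    (hden : (1 - (α + β + γ - 1)) * z₀.re + (α + β + γ - 1) * (t + 1)
        - γ * t - β ≠ 0) :
    ‖z₀‖ ^ 2 =
      α * t * z₀.re /
        ((1 - (α + β + γ - 1)) * z₀.re + (α + β + γ - 1) * (t + 1)
          - γ * t - β) := by
  have hz₀ : z₀ ≠ 0 := by simpa using ne_ofReal_of_im_ne_zero hy.ne' 0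
  have hρ : normSq z₀ ≠ 0 := (normSq_pos.mpr hz₀).ne'
  have hre := re_identity_of_residue_eq α β γ t hy.ne' heq
  rw [Complex.sq_norm, eq_div_iff hden]
  field_simp at hre
  linear_combination -hre

open Complex in
theorem normSq_eq_rho
    (α β γ t : ℝ) (hα : 0 < α) (hβ : 0 < β) (hγ : 0 < γ)
    (hE : α + β + γ - 1 < 1) (ht : 1 < t)
    (z₀ : ℂ) (hy : 0 < z₀.im)
    (heq : (α : ℂ) / z₀ + (β : ℂ) / (z₀ - 1) + (γ : ℂ) / (z₀ - t)
        = 1 / (I * (z₀.im : ℂ)))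
    (hden : (1 - (α + β + γ - 1)) * z₀.re + (α + β + γ - 1) * (t + 1)
        - γ * t - β ≠ 0) :
    ‖z₀‖ ^ 2 =
      α * t * z₀.re /
        ((1 - (α + β + γ - 1)) * z₀.re + (α + β + γ - 1) * (t + 1)
          - γ * t - β) :=
  normSq_eq_rho_general α β γ t z₀ hy heq hden
end

section
/- For a > 0, Re a > 0 and Re(c - a) > 0 and real z < 1, the integral ∫₀¹ t^{a-1}(1-t)^{c-a-1}(1-tz)^{-b} dt equals B(a, c-a)·₂F₁(a, b; c; z), where ₂F₁ is the Gaussian hypergeometric series and B is the Euler Beta function, provided additionally |z| < 1 so the series converges. -/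
/-!
Expanding `(1 - t z)^(-b) = ∑ (b)ₙ/n! (t z)ⁿ` under the integral, the `n`-th term integrates to
`(b)ₙ zⁿ/n! · B(a + n, c - a)`, and `B(a + n, c - a) = (a)ₙ/(c)ₙ · B(a, c - a)` by the functional
equation of `Γ`. Interchanging sum and integral is justified because every term is a constant
times a nonnegative function, so the integrals of the norms are the absolute values of the terms
of the hypergeometric series, which converges absolutely for `|z| < 1`.
-/

/-- Pochhammer symbol `(q)ₙ`. -/
noncomputable def poch (q : ℝ) (n : ℕ) : ℝ := (ascPochhammer ℝ n).eval q

/-- Gaussian hypergeometric series `₂F₁(a,b;c;z)`. -/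
noncomputable def hyp2F1 (a b c z : ℝ) : ℝ :=
  ∑' n : ℕ, poch a n * poch b n / (poch c n * n.factorial) * z ^ n

/-- Euler Beta function. -/
noncomputable def eulerBeta (x y : ℝ) : ℝ :=
  Real.Gamma x * Real.Gamma y / Real.Gamma (x + y)

open MeasureTheory intervalIntegral

theorem poch_succ (q : ℝ) (n : ℕ) : poch q (n + 1) = poch q n * (q + n) := by
  simp [poch, ascPochhammer_succ_eval]

theorem poch_div_factorial_eq_choose (b : ℝ) (n : ℕ) :
    poch b n / n.factorial = Ring.choose (b + n - 1) n := by
  rw [← Ring.multichoose_eq, eq_comm, eq_div_iff (by positivity), mul_comm, ← nsmul_eq_mul,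
    Ring.factorial_nsmul_multichoose_eq_ascPochhammer, Polynomial.ascPochhammer_smeval_eq_eval,
    poch]

theorem hasSum_poch_div_factorial_mul_pow (b : ℝ) {x : ℝ} (hx : |x| < 1) :
    HasSum (fun n => poch b n / n.factorial * x ^ n) ((1 - x) ^ (-b)) := by
  have h := (Real.one_div_one_sub_rpow_hasFPowerSeriesOnBall_zero b).hasSum
    (y := x) (by simpa [Metric.mem_eball, edist_dist, Real.dist_eq] using hx)
  simpa [FormalMultilinearSeries.ofScalars_apply_eq, poch_div_factorial_eq_choose, mul_comm,
    Real.rpow_neg (by linarith [abs_lt.1 hx] : (0:ℝ) ≤ 1 - x)] using h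

theorem hasSum_one_sub_mul_rpow_neg (b : ℝ) {t z : ℝ} (ht : t ∈ Set.Icc (0 : ℝ) 1)
    (hz : |z| < 1) :
    HasSum (fun n => poch b n / n.factorial * z ^ n * t ^ n) ((1 - t * z) ^ (-b)) := by
  have htz : |t * z| < 1 := by
    rw [abs_mul, abs_of_nonneg ht.1]
    exact lt_of_le_of_lt (mul_le_of_le_one_left (abs_nonneg z) ht.2) hz
  simpa only [mul_pow, mul_comm (t ^ _), mul_assoc] using hasSum_poch_div_factorial_mul_pow b htz

theorem one_le_radius_ordinaryHypergeometricSeries {𝕂 𝔸 : Type*} [RCLike 𝕂]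
    [NormedDivisionRing 𝔸] [NormedAlgebra 𝕂 𝔸] (a b c : 𝕂) :
    1 ≤ (ordinaryHypergeometricSeries 𝔸 a b c).radius := by
  by_cases h : ∃ k : ℕ, (k : 𝕂) = -a ∨ (k : 𝕂) = -b ∨ (k : 𝕂) = -c
  · obtain ⟨k, hk | hk | hk⟩ := h
    · obtain rfl : a = -k := by rw [hk, neg_neg]
      simp [ordinaryHypergeometric_radius_top_of_neg_nat₁]
    · obtain rfl : b = -k := by rw [hk, neg_neg]
      simp [ordinaryHypergeometric_radius_top_of_neg_nat₂]
    · obtain rfl : c = -k := by rw [hk, neg_neg]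
      simp [ordinaryHypergeometric_radius_top_of_neg_nat₃]
  · push Not at h
    rw [ordinaryHypergeometricSeries_radius_eq_one _ _ _ _ h]

theorem poch_mul_poch_div_mul_pow_eq (a b c z : ℝ) (n : ℕ) :
    poch a n * poch b n / (poch c n * n.factorial) * z ^ n
      = ordinaryHypergeometricSeries ℝ a b c n (fun _ => z) := by
  rw [ordinaryHypergeometricSeries_apply_eq, smul_eq_mul, poch, poch, poch]
  ring

theorem summable_norm_hyp2F1_term (a b c : ℝ) {z : ℝ} (hz : |z| < 1) :
    Summable fun n : ℕ => ‖poch a n * poch b n / (poch c n * n.factorial) * z ^ n‖ := by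
  simp_rw [poch_mul_poch_div_mul_pow_eq]
  refine FormalMultilinearSeries.summable_norm_apply _ ?_
  refine lt_of_lt_of_le ?_ (one_le_radius_ordinaryHypergeometricSeries a b c)
  simpa [edist_dist, Real.dist_eq] using hz

theorem hasSum_hyp2F1 (a b c : ℝ) {z : ℝ} (hz : |z| < 1) :
    HasSum (fun n : ℕ => poch a n * poch b n / (poch c n * n.factorial) * z ^ n)
      (hyp2F1 a b c z) :=
  (summable_norm_hyp2F1_term a b c hz).of_norm.hasSum

theorem eulerBeta_eq_beta : eulerBeta = ProbabilityTheory.beta := rfl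

theorem ofReal_rpow_mul_one_sub_rpow (u v : ℝ) {t : ℝ} (ht : t ∈ Set.Icc (0 : ℝ) 1) :
    ((t ^ (u - 1) * (1 - t) ^ (v - 1) : ℝ) : ℂ)
      = (t : ℂ) ^ ((u : ℂ) - 1) * (1 - (t : ℂ)) ^ ((v : ℂ) - 1) := by
  push_cast [Complex.ofReal_cpow ht.1, Complex.ofReal_cpow (sub_nonneg.2 ht.2)]
  rfl

theorem integral_rpow_mul_one_sub_rpow {u v : ℝ} (hu : 0 < u) (hv : 0 < v) :
    ∫ t in (0 : ℝ)..1, t ^ (u - 1) * (1 - t) ^ (v - 1) = eulerBeta u v := by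
  have h : ((∫ t in (0 : ℝ)..1, t ^ (u - 1) * (1 - t) ^ (v - 1) : ℝ) : ℂ)
      = Complex.betaIntegral u v := by
    rw [← intervalIntegral.integral_ofReal, Complex.betaIntegral]
    refine integral_congr fun t ht => ?_
    rw [Set.uIcc_of_le zero_le_one] at ht
    exact ofReal_rpow_mul_one_sub_rpow u v ht
  rw [eulerBeta_eq_beta, ProbabilityTheory.beta_eq_betaIntegralReal u v hu hv, ← h,
    Complex.ofReal_re]

theorem intervalIntegrable_rpow_mul_one_sub_rpow {u v : ℝ} (hu : 0 < u) (hv : 0 < v) :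
    IntervalIntegrable (fun t : ℝ => t ^ (u - 1) * (1 - t) ^ (v - 1)) volume 0 1 :=
  intervalIntegrable_of_integral_ne_zero <| by
    rw [integral_rpow_mul_one_sub_rpow hu hv, eulerBeta_eq_beta]
    exact (ProbabilityTheory.beta_pos hu hv).ne'

theorem Gamma_add_nat_eq_poch_mul_Gamma {x : ℝ} (hx : ∀ k : ℕ, x + k ≠ 0) (n : ℕ) :
    Real.Gamma (x + n) = poch x n * Real.Gamma x := by
  induction n with
  | zero => simp [poch]
  | succ n ih => rw [Nat.cast_succ, ← add_assoc, Real.Gamma_add_one (hx n), ih, poch_succ]; ring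

theorem eulerBeta_add_nat {u v : ℝ} (hu : 0 < u) (hv : 0 < v) (n : ℕ) :
    eulerBeta (u + n) v = poch u n / poch (u + v) n * eulerBeta u v := by
  have huv : 0 < u + v := add_pos hu hv
  rw [eulerBeta, eulerBeta, add_right_comm,
    Gamma_add_nat_eq_poch_mul_Gamma (fun k => by positivity),
    Gamma_add_nat_eq_poch_mul_Gamma (fun k => by positivity)]
  have := (Real.Gamma_pos_of_pos huv).ne'
  have := (ascPochhammer_pos n _ huv).ne'
  rw [poch]
  field_simp

theorem integral_pow_mul_rpow_mul_one_sub_rpow {u v : ℝ} (hu : 0 < u) (hv : 0 < v) (n : ℕ) :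
    ∫ t in (0 : ℝ)..1, t ^ n * (t ^ (u - 1) * (1 - t) ^ (v - 1))
      = poch u n / poch (u + v) n * eulerBeta u v := by
  rw [← eulerBeta_add_nat hu hv, ← integral_rpow_mul_one_sub_rpow (by positivity) hv]
  refine integral_congr_ae (ae_of_all _ fun t ht => ?_)
  rw [Set.uIoc_of_le zero_le_one] at ht
  rw [← mul_assoc, ← Real.rpow_natCast, ← Real.rpow_add ht.1, add_sub_assoc', add_comm (n : ℝ)]

theorem intervalIntegral.hasSum_integral_of_summable_integral_norm {ι E : Type*} [Countable ι]
    [NormedAddCommGroup E] [NormedSpace ℝ E] {μ : Measure ℝ} {F : ι → ℝ → E} {a b : ℝ}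
    (hab : a ≤ b) (hF_int : ∀ i, IntervalIntegrable (F i) μ a b)
    (hF_sum : Summable fun i => ∫ t in a..b, ‖F i t‖ ∂μ) :
    HasSum (fun i => ∫ t in a..b, F i t ∂μ) (∫ t in a..b, ∑' i, F i t ∂μ) := by
  simp only [integral_of_le hab] at *
  exact MeasureTheory.hasSum_integral_of_summable_integral_norm (fun i => (hF_int i).1) hF_sum

theorem intervalIntegral.integral_norm_const_mul_of_nonneg {f : ℝ → ℝ} {a b : ℝ} (hab : a ≤ b)
    (C : ℝ) (hf : ∀ t ∈ Set.Icc a b, 0 ≤ f t) :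
    ∫ t in a..b, ‖C * f t‖ = ‖∫ t in a..b, C * f t‖ := by
  rw [integral_const_mul, norm_mul, Real.norm_of_nonneg (integral_nonneg hab hf),
    ← integral_const_mul]
  refine integral_congr fun t ht => ?_
  rw [Set.uIcc_of_le hab] at ht
  simp only [norm_mul, Real.norm_of_nonneg (hf t ht)]

theorem euler_integral_repr_general
    (a b c z : ℝ) (ha : 0 < a) (hca : a < c) (hz : |z| < 1) :
    (∫ t in (0:ℝ)..1, t ^ (a - 1) * (1 - t) ^ (c - a - 1) * (1 - t * z) ^ (-b))
      = eulerBeta a (c - a) * hyp2F1 a b c z := by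
  have hv : 0 < c - a := sub_pos.2 hca
  set F : ℕ → ℝ → ℝ := fun n t =>
    poch b n / n.factorial * z ^ n * (t ^ n * (t ^ (a - 1) * (1 - t) ^ (c - a - 1)))
  have hF n : ∫ t in (0 : ℝ)..1, F n t
      = eulerBeta a (c - a) * (poch a n * poch b n / (poch c n * n.factorial) * z ^ n) := by
    rw [intervalIntegral.integral_const_mul, integral_pow_mul_rpow_mul_one_sub_rpow ha hv,
      add_sub_cancel]
    ring
  have hF_int n : IntervalIntegrable (F n) volume 0 1 :=
    ((intervalIntegrable_rpow_mul_one_sub_rpow ha hv).continuousOn_mul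
      (continuous_pow n).continuousOn).const_mul _
  have hF_norm n : ∫ t in (0 : ℝ)..1, ‖F n t‖ = ‖∫ t in (0 : ℝ)..1, F n t‖ :=
    integral_norm_const_mul_of_nonneg zero_le_one _ fun t ht => mul_nonneg (pow_nonneg ht.1 n)
      (mul_nonneg (Real.rpow_nonneg ht.1 _) (Real.rpow_nonneg (sub_nonneg.2 ht.2) _))
  have hexp : ∀ t ∈ Set.uIcc (0 : ℝ) 1,
      t ^ (a - 1) * (1 - t) ^ (c - a - 1) * (1 - t * z) ^ (-b) = ∑' n, F n t := by
    intro t ht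
    rw [Set.uIcc_of_le zero_le_one] at ht
    rw [mul_comm, ← ((hasSum_one_sub_mul_rpow_neg b ht hz).mul_right _).tsum_eq]
    simp only [F, mul_assoc]
  have hsum : Summable fun n => ∫ t in (0 : ℝ)..1, ‖F n t‖ := by
    simpa only [hF_norm, hF, norm_mul] using (summable_norm_hyp2F1_term a b c hz).mul_left _
  rw [integral_congr hexp]
  exact (hasSum_integral_of_summable_integral_norm zero_le_one hF_int hsum).unique
    (((hasSum_hyp2F1 a b c hz).mul_left _).congr_fun hF)

theorem euler_integral_repr
    (a b c z : ℝ) (ha : 0 < a) (hca : a < c) (hz1 : z < 1) (hz : |z| < 1) :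
    (∫ t in (0:ℝ)..1, t ^ (a - 1) * (1 - t) ^ (c - a - 1) * (1 - t * z) ^ (-b))
      = eulerBeta a (c - a) * hyp2F1 a b c z :=
  euler_integral_repr_general a b c z ha hca hz
end
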